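/- arXiv:q-alg/9705019 — 2 statements merged into one kernel-verified Lean document; each statement's English description precedes it below -/
import Mathlib

section
/- For nonzero complex numbers q, s and any λ, μ, ν ∈ ℂ, the 4×4 matrices R^{λ,μ} := diag-block matrix with entries R₁₁ = q^{1-λ+μ}, R₂₂ = q^{λ+μ}, R₂₃ = (q - q⁻¹) s^{-λ+μ}, R₃₃ = q^{-λ-μ}, R₄₄ = q^{1+λ-μ} (all other entries zero, where indices refer to the ordered basis e₁⊗e₁, e₁⊗e₂, e₂⊗e₁, e₂⊗e₂ of ℂ²⊗ℂ²) satisfy the coloured Yang-Baxter equation R^{λ,μ}₁₂ R^{λ,ν}₁₃ R^{μ,ν}₂₃ = R^{μ,ν}₂₃ R^{λ,ν}₁₃ R^{λ,μ}₁₂ as 8×8 matrices acting on ℂ²⊗ℂ²⊗ℂ². -/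
open Complex Matrix

section Embeddings

variable {I : Type*} [DecidableEq I]

/-- Action of a matrix on factors 1 and 2 of a triple tensor product. -/
def m12 (R : Matrix (I × I) (I × I) ℂ) : Matrix (I × I × I) (I × I × I) ℂ :=
  fun p q => R (p.1, p.2.1) (q.1, q.2.1) * (if p.2.2 = q.2.2 then 1 else 0)

/-- Action of a matrix on factors 1 and 3 of a triple tensor product. -/
def m13 (R : Matrix (I × I) (I × I) ℂ) : Matrix (I × I × I) (I × I × I) ℂ :=
  fun p q => R (p.1, p.2.2) (q.1, q.2.2) * (if p.2.1 = q.2.1 then 1 else 0)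

/-- Action of a matrix on factors 2 and 3 of a triple tensor product. -/
def m23 (R : Matrix (I × I) (I × I) ℂ) : Matrix (I × I × I) (I × I × I) ℂ :=
  fun p q => (if p.1 = q.1 then 1 else 0) * R (p.2.1, p.2.2) (q.2.1, q.2.2)

end Embeddings

/-- The coloured `R`-matrix of `U_{q,s}(gl(2))` in the two-dimensional representation,
with `q = exp h`, `s = exp g` (complex powers taken via the exponential), acting on
`ℂ² ⊗ ℂ²` in the ordered basis `e₁⊗e₁, e₁⊗e₂, e₂⊗e₁, e₂⊗e₂`. -/
noncomputable def Rgl2 (h g l m : ℂ) : Matrix (Fin 2 × Fin 2) (Fin 2 × Fin 2) ℂ :=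
  fun p q =>
    if p = (0, 0) ∧ q = (0, 0) then Complex.exp ((1 - l + m) * h)
    else if p = (0, 1) ∧ q = (0, 1) then Complex.exp ((l + m) * h)
    else if p = (0, 1) ∧ q = (1, 0) then
      (Complex.exp h - Complex.exp (-h)) * Complex.exp ((-l + m) * g)
    else if p = (1, 0) ∧ q = (1, 0) then Complex.exp ((-l - m) * h)
    else if p = (1, 1) ∧ q = (1, 1) then Complex.exp ((1 + l - m) * h)
    else 0

/-!
All three `R`-matrices conserve the number of `e₂` factors and are triangular on each weight
space of `ℂ² ⊗ ℂ² ⊗ ℂ²`, so the Yang–Baxter equation for matrices of this shape reduces to six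
scalar identities, coming from the weight-one and weight-two blocks. Since a colour `λ` enters only
through `q^λ` and `s^λ`, these are identities between Laurent monomials in `q`, `q^λ`, `q^μ`, `q^ν`,
`s^λ`, `s^μ`, `s^ν`, the only non-monomial one being `q² - 1 = q (q - q⁻¹)`.
-/

def fiveVertex (a b c d e : ℂ) : Matrix (Fin 2 × Fin 2) (Fin 2 × Fin 2) ℂ :=
  fun p q =>
    if p = (0, 0) ∧ q = (0, 0) then a
    else if p = (0, 1) ∧ q = (0, 1) then b
    else if p = (0, 1) ∧ q = (1, 0) then c
    else if p = (1, 0) ∧ q = (1, 0) then d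
    else if p = (1, 1) ∧ q = (1, 1) then e
    else 0

theorem fiveVertex_yangBaxter {a₁ b₁ c₁ d₁ e₁ a₂ b₂ c₂ d₂ e₂ a₃ b₃ c₃ d₃ e₃ : ℂ}
    (h₁ : c₁ * a₃ * d₂ = c₁ * a₂ * d₃) (h₂ : c₂ * a₁ * a₃ = c₂ * d₁ * b₃ + c₁ * a₂ * c₃)
    (h₃ : c₃ * a₁ * b₂ = c₃ * a₂ * b₁) (h₄ : c₃ * d₁ * e₂ = c₃ * d₂ * e₁)
    (h₅ : c₂ * e₁ * e₃ = c₂ * b₁ * d₃ + c₁ * c₃ * e₂) (h₆ : c₁ * b₃ * e₂ = c₁ * b₂ * e₃) :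
    m12 (fiveVertex a₁ b₁ c₁ d₁ e₁) * m13 (fiveVertex a₂ b₂ c₂ d₂ e₂) *
        m23 (fiveVertex a₃ b₃ c₃ d₃ e₃)
      = m23 (fiveVertex a₃ b₃ c₃ d₃ e₃) * m13 (fiveVertex a₂ b₂ c₂ d₂ e₂) *
        m12 (fiveVertex a₁ b₁ c₁ d₁ e₁) := by
  ext ⟨i, j, k⟩ ⟨i', j', k'⟩
  simp only [Matrix.mul_apply, m12, m13, m23, Fintype.sum_prod_type, Fin.sum_univ_two]
  fin_cases i <;> fin_cases j <;> fin_cases k <;> fin_cases i' <;> fin_cases j' <;> fin_cases k' <;>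
    simp only [fiveVertex, Fin.isValue, Fin.mk_one, Fin.zero_eta, Prod.mk.injEq, add_zero,
      zero_add, and_false, and_self, and_true, mul_one, mul_zero, one_mul, zero_mul, one_ne_zero,
      zero_ne_one, ↓reduceIte] <;>
    first
    | ring1
    | linear_combination h₁
    | linear_combination h₂
    | linear_combination h₃
    | linear_combination h₄
    | linear_combination -h₅
    | linear_combination h₆

/-- The colours `λᵢ` enter as `xᵢ = q^λᵢ` and `yᵢ = s^λᵢ`. -/
noncomputable def colouredR (q x₁ y₁ x₂ y₂ : ℂ) : Matrix (Fin 2 × Fin 2) (Fin 2 × Fin 2) ℂ :=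
  fiveVertex (q * x₂ / x₁) (x₁ * x₂) ((q - q⁻¹) * (y₂ / y₁)) (x₁ * x₂)⁻¹ (q * x₁ / x₂)

theorem colouredR_yangBaxter {q x₁ y₁ x₂ y₂ x₃ y₃ : ℂ} (hq : q ≠ 0) (hx₂ : x₂ ≠ 0)
    (hy₂ : y₂ ≠ 0) :
    m12 (colouredR q x₁ y₁ x₂ y₂) * m13 (colouredR q x₁ y₁ x₃ y₃) * m23 (colouredR q x₂ y₂ x₃ y₃)
      = m23 (colouredR q x₂ y₂ x₃ y₃) * m13 (colouredR q x₁ y₁ x₃ y₃) *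
        m12 (colouredR q x₁ y₁ x₂ y₂) := by
  apply fiveVertex_yangBaxter <;> field_simp <;> ring

theorem Rgl2_eq_colouredR (h g l m : ℂ) :
    Rgl2 h g l m = colouredR (exp h) (exp (l * h)) (exp (l * g)) (exp (m * h)) (exp (m * g)) := by
  change fiveVertex (exp ((1 - l + m) * h)) (exp ((l + m) * h))
    ((exp h - exp (-h)) * exp ((-l + m) * g)) (exp ((-l - m) * h)) (exp ((1 + l - m) * h)) = _
  unfold colouredR
  congr 1 <;> simp only [← exp_add, ← exp_sub, ← exp_neg] <;> ring_nf

/-- the coloured `R`-matrix of `U_{q,s}(gl(2))` satisfies the coloured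
Yang–Baxter equation `R^{λ,μ}₁₂ R^{λ,ν}₁₃ R^{μ,ν}₂₃ = R^{μ,ν}₂₃ R^{λ,ν}₁₃ R^{λ,μ}₁₂`
on `ℂ² ⊗ ℂ² ⊗ ℂ²`. -/
theorem gl2_coloured_yang_baxter (h g l m n : ℂ) :
    m12 (Rgl2 h g l m) * m13 (Rgl2 h g l n) * m23 (Rgl2 h g m n)
      = m23 (Rgl2 h g m n) * m13 (Rgl2 h g l n) * m12 (Rgl2 h g l m) := by
  simp only [Rgl2_eq_colouredR]
  exact colouredR_yangBaxter (exp_ne_zero h) (exp_ne_zero _) (exp_ne_zero _)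
end

section
/- For any nonzero complex z and colour parameters λ = (λ₊, λ₋), μ = (μ₊, μ₋) ∈ (ℂ\{0})², the 9×9 matrix R^{λ,μ} = I₉ + 2λ₋μ₊ z (A₋ ⊗ A₊) − λ₊λ₋ z (M ⊗ N) − μ₊μ₋ z (N ⊗ M), where N = E₂₂, M = E₁₃, A₊ = E₂₃, A₋ = E₁₂ are 3×3 elementary matrices, satisfies the coloured Yang-Baxter equation R^{λ,μ}₁₂ R^{λ,ν}₁₃ R^{μ,ν}₂₃ = R^{μ,ν}₂₃ R^{λ,ν}₁₃ R^{λ,μ}₁₂ on ℂ³⊗ℂ³⊗ℂ³. -/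
open Complex Matrix Kronecker

/-- `D(N) = E₂₂` in the 3-dimensional representation of the oscillator algebra. -/
def oscN : Matrix (Fin 3) (Fin 3) ℂ := Matrix.single 1 1 1
/-- `D(M) = E₁₃`. -/
def oscM : Matrix (Fin 3) (Fin 3) ℂ := Matrix.single 0 2 1
/-- `D(A₊) = E₂₃`. -/
def oscAp : Matrix (Fin 3) (Fin 3) ℂ := Matrix.single 1 2 1
/-- `D(A₋) = E₁₂`. -/
def oscAm : Matrix (Fin 3) (Fin 3) ℂ := Matrix.single 0 1 1

/-- The coloured `R`-matrix of `U_z(h(4))` in the 3-dimensional representation: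
`R^{λ,μ} = I₉ + 2λ₋μ₊z (A₋ ⊗ A₊) − λ₊λ₋z (M ⊗ N) − μ₊μ₋z (N ⊗ M)`. -/
noncomputable def Rosc (z lp lm mp mm : ℂ) :
    Matrix (Fin 3 × Fin 3) (Fin 3 × Fin 3) ℂ :=
  1 + (2 * lm * mp * z) • (oscAm ⊗ₖ oscAp)
    - (lp * lm * z) • (oscM ⊗ₖ oscN) - (mp * mm * z) • (oscN ⊗ₖ oscM)

/-!
Each embedding `m12`, `m13`, `m23` is linear and sends `A ⊗ B` to the triple Kronecker product
with `1` in the remaining slot, so both sides of the equation expand into linear combinations of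
triple Kronecker products of words in the elementary matrices. These multiply by
`E_ij E_kl = δ_jk E_il`; the only nonzero products are `A₋A₊ = M`, `A₋N = A₋`, `NA₊ = A₊` and
`N² = N`, and after this reduction the two sides are the same linear combination.
-/

section Embeddings

variable {I : Type*} [DecidableEq I]

lemma m12_add (R S : Matrix (I × I) (I × I) ℂ) : m12 (R + S) = m12 R + m12 S := by
  ext; simp only [m12, Matrix.add_apply, add_mul]

lemma m12_sub (R S : Matrix (I × I) (I × I) ℂ) : m12 (R - S) = m12 R - m12 S := by
  ext; simp only [m12, Matrix.sub_apply, sub_mul]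

lemma m12_smul (c : ℂ) (R : Matrix (I × I) (I × I) ℂ) : m12 (c • R) = c • m12 R := by
  ext; simp only [m12, Matrix.smul_apply, smul_eq_mul, mul_assoc]

lemma m12_one : m12 (1 : Matrix (I × I) (I × I) ℂ) = 1 := by
  ext ⟨a, b, c⟩ ⟨d, e, f⟩; simp only [m12, one_apply, Prod.ext_iff]; split_ifs <;> simp_all

lemma m12_kronecker (A B : Matrix I I ℂ) : m12 (A ⊗ₖ B) = A ⊗ₖ (B ⊗ₖ 1) := by
  ext ⟨a, b, c⟩ ⟨d, e, f⟩; simp only [m12, kroneckerMap_apply, one_apply]; ring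

lemma m13_add (R S : Matrix (I × I) (I × I) ℂ) : m13 (R + S) = m13 R + m13 S := by
  ext; simp only [m13, Matrix.add_apply, add_mul]

lemma m13_sub (R S : Matrix (I × I) (I × I) ℂ) : m13 (R - S) = m13 R - m13 S := by
  ext; simp only [m13, Matrix.sub_apply, sub_mul]

lemma m13_smul (c : ℂ) (R : Matrix (I × I) (I × I) ℂ) : m13 (c • R) = c • m13 R := by
  ext; simp only [m13, Matrix.smul_apply, smul_eq_mul, mul_assoc]

lemma m13_one : m13 (1 : Matrix (I × I) (I × I) ℂ) = 1 := by
  ext ⟨a, b, c⟩ ⟨d, e, f⟩; simp only [m13, one_apply, Prod.ext_iff]; split_ifs <;> simp_all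

lemma m13_kronecker (A B : Matrix I I ℂ) : m13 (A ⊗ₖ B) = A ⊗ₖ (1 ⊗ₖ B) := by
  ext ⟨a, b, c⟩ ⟨d, e, f⟩; simp only [m13, kroneckerMap_apply, one_apply]; ring

lemma m23_add (R S : Matrix (I × I) (I × I) ℂ) : m23 (R + S) = m23 R + m23 S := by
  ext; simp only [m23, Matrix.add_apply, mul_add]

lemma m23_sub (R S : Matrix (I × I) (I × I) ℂ) : m23 (R - S) = m23 R - m23 S := by
  ext; simp only [m23, Matrix.sub_apply, mul_sub]

lemma m23_smul (c : ℂ) (R : Matrix (I × I) (I × I) ℂ) : m23 (c • R) = c • m23 R := by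
  ext; simp only [m23, Matrix.smul_apply, smul_eq_mul, mul_left_comm]

lemma m23_one : m23 (1 : Matrix (I × I) (I × I) ℂ) = 1 := by
  ext ⟨a, b, c⟩ ⟨d, e, f⟩; simp only [m23, one_apply, Prod.ext_iff]; split_ifs <;> simp_all

lemma m23_kronecker (A B : Matrix I I ℂ) : m23 (A ⊗ₖ B) = 1 ⊗ₖ (A ⊗ₖ B) := by
  ext ⟨a, b, c⟩ ⟨d, e, f⟩; simp only [m23, kroneckerMap_apply, one_apply]

end Embeddings

theorem oscillator_coloured_yang_baxter_general
    (z : ℂ) (lp lm mp mm np nm : ℂ) :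
    m12 (Rosc z lp lm mp mm) * m13 (Rosc z lp lm np nm) * m23 (Rosc z mp mm np nm)
      = m23 (Rosc z mp mm np nm) * m13 (Rosc z lp lm np nm) *
        m12 (Rosc z lp lm mp mm) := by
  simp only [Rosc, m12_add, m12_sub, m12_smul, m12_one, m12_kronecker, m13_add, m13_sub,
    m13_smul, m13_one, m13_kronecker, m23_add, m23_sub, m23_smul, m23_one, m23_kronecker]
  simp only [oscN, oscM, oscAp, oscAm, mul_add, add_mul, mul_sub, sub_mul, Matrix.one_mul,
    Matrix.smul_mul, Matrix.mul_smul, ← mul_kronecker_mul,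
    single_mul_single_same, single_mul_single_of_ne, ne_eq, Fin.reduceEq, not_false_eq_true,
    zero_kronecker, kronecker_zero, smul_zero, smul_smul, mul_one, add_zero, sub_zero]
  module

/-- the coloured `R`-matrix of the standard quantum oscillator algebra
satisfies the coloured Yang–Baxter equation on `ℂ³ ⊗ ℂ³ ⊗ ℂ³`. -/
theorem oscillator_coloured_yang_baxter
    (z : ℂ) (hz : z ≠ 0) (lp lm mp mm np nm : ℂ)
    (hlp : lp ≠ 0) (hlm : lm ≠ 0) (hmp : mp ≠ 0) (hmm : mm ≠ 0)
    (hnp : np ≠ 0) (hnm : nm ≠ 0) :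
    m12 (Rosc z lp lm mp mm) * m13 (Rosc z lp lm np nm) * m23 (Rosc z mp mm np nm)
      = m23 (Rosc z mp mm np nm) * m13 (Rosc z lp lm np nm) *
        m12 (Rosc z lp lm mp mm) :=
  oscillator_coloured_yang_baxter_general z lp lm mp mm np nm
end
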